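/- With f = f̄ − f̲ as above and g the Lovász subgradient at x ∈ [0,1]^n, for every z ∈ [0,1]^n we have g^⊤ z ≤ (1/α) (f̄)_C(z) + β (−f̲)_C(z), where (·)_C denotes the convex closure. -/

import Mathlib

/-- The chain `A_i = {π(1),…,π(i)}` induced by a sorting permutation `π`. -/
def lovaszChain (n : ℕ) (π : Equiv.Perm (Fin n)) (i : ℕ) : Finset (Fin n) :=
  Finset.univ.filter (fun a : Fin n => ((π.symm a : ℕ)) < i)

/-- Convex closure `f_C(z) = sup { g̃^⊤ z + ρ : g̃(A) + ρ ≤ f(A) for all A }`. -/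
noncomputable def convexClosure (n : ℕ) (f : Finset (Fin n) → ℝ) (z : Fin n → ℝ) : ℝ :=
  sSup {r : ℝ | ∃ (g : Fin n → ℝ) (ρ : ℝ),
    (∀ A : Finset (Fin n), (∑ i ∈ A, g i) + ρ ≤ f A) ∧ r = (∑ j, g j * z j) + ρ}

/-!
Write `A_k` for the chain and `m_h (π k) = h A_{k+1} - h A_k` for the chain marginals of a set
function `h`. For every set `A`, `h A` telescopes as the sum of `h (A ∩ A_{k+1}) - h (A ∩ A_k)`
over the `k` with `π k ∈ A`, and each such term is the marginal of `π k` on `A ∩ A_k ⊆ A_k`.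
Weak DR-submodularity of `f̄` therefore gives `α m_{f̄}(A) ≤ f̄ A`, and weak DR-supermodularity
of `f̲` gives `β f̲ A ≤ m_{f̲}(A)`. So `α m_{f̄}` and `-m_{f̲}/β` are feasible (with `ρ = 0`) in
the suprema defining the convex closures of `f̄` and `-f̲`, and `g = m_{f̄} - m_{f̲}`.
-/

open Finset

section lovaszChain

variable {n : ℕ} (π : Equiv.Perm (Fin n))

lemma lovaszChain_zero : lovaszChain n π 0 = ∅ := by
  simp [lovaszChain]

lemma lovaszChain_self : lovaszChain n π n = univ := by
  ext a; simp [lovaszChain]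

lemma apply_notMem_lovaszChain (k : Fin n) : π k ∉ lovaszChain n π k := by
  simp [lovaszChain]

lemma lovaszChain_succ (k : Fin n) :
    lovaszChain n π (k + 1) = insert (π k) (lovaszChain n π k) := by
  ext a
  simp only [lovaszChain, mem_filter, mem_univ, true_and, mem_insert, Nat.lt_succ_iff_lt_or_eq,
    Fin.val_inj, Equiv.symm_apply_eq]
  tauto

lemma inter_lovaszChain_succ_of_mem {A : Finset (Fin n)} {k : Fin n} (hk : π k ∈ A) :
    A ∩ lovaszChain n π (k + 1) = insert (π k) (A ∩ lovaszChain n π k) := by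
  rw [lovaszChain_succ, inter_insert_of_mem hk]

lemma inter_lovaszChain_succ_of_notMem {A : Finset (Fin n)} {k : Fin n} (hk : π k ∉ A) :
    A ∩ lovaszChain n π (k + 1) = A ∩ lovaszChain n π k := by
  rw [lovaszChain_succ, inter_insert_of_notMem hk]

lemma sum_sub_inter_lovaszChain (h : Finset (Fin n) → ℝ) (h0 : h ∅ = 0) (A : Finset (Fin n)) :
    ∑ k with π k ∈ A, (h (A ∩ lovaszChain n π (k + 1)) - h (A ∩ lovaszChain n π k)) = h A := by
  have hvanish (k : Fin n) (hk : π k ∉ A) :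
      h (A ∩ lovaszChain n π (k + 1)) - h (A ∩ lovaszChain n π k) = 0 := by
    rw [inter_lovaszChain_succ_of_notMem π hk, sub_self]
  rw [sum_filter_of_ne fun k _ => not_imp_comm.1 (hvanish k),
    Fin.sum_univ_eq_sum_range fun k => h (A ∩ lovaszChain n π (k + 1)) - h (A ∩ lovaszChain n π k),
    sum_range_sub (fun k => h (A ∩ lovaszChain n π k)), lovaszChain_zero, lovaszChain_self,
    inter_univ, inter_empty, h0, sub_zero]

end lovaszChain

section chainMarginal

variable {n : ℕ} (π : Equiv.Perm (Fin n))

def chainMarginal (h : Finset (Fin n) → ℝ) (j : Fin n) : ℝ :=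
  h (lovaszChain n π (π.symm j + 1)) - h (lovaszChain n π (π.symm j))

lemma chainMarginal_apply (h : Finset (Fin n) → ℝ) (k : Fin n) :
    chainMarginal π h (π k) = h (lovaszChain n π (k + 1)) - h (lovaszChain n π k) := by
  simp [chainMarginal]

lemma sum_chainMarginal (h : Finset (Fin n) → ℝ) (A : Finset (Fin n)) :
    ∑ i ∈ A, chainMarginal π h i
      = ∑ k with π k ∈ A, (h (lovaszChain n π (k + 1)) - h (lovaszChain n π k)) :=
  (sum_equiv π (by simp) fun k _ => (chainMarginal_apply π h k).symm).symm

lemma mul_sum_chainMarginal_le {α : ℝ} {h : Finset (Fin n) → ℝ} (h0 : h ∅ = 0)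
    (hDR : ∀ A B : Finset (Fin n), A ⊆ B → ∀ i ∉ B,
      h (insert i A) - h A ≥ α * (h (insert i B) - h B))
    (A : Finset (Fin n)) :
    α * ∑ i ∈ A, chainMarginal π h i ≤ h A := by
  rw [sum_chainMarginal, mul_sum, ← sum_sub_inter_lovaszChain π h h0 A]
  refine sum_le_sum fun k hk => ?_
  have hDRk := hDR (A ∩ _) _ inter_subset_right (π k) (apply_notMem_lovaszChain π k)
  rwa [← lovaszChain_succ, ← inter_lovaszChain_succ_of_mem π (mem_filter.1 hk).2] at hDRk

lemma mul_le_sum_chainMarginal {β : ℝ} {h : Finset (Fin n) → ℝ} (h0 : h ∅ = 0)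
    (hDR : ∀ A B : Finset (Fin n), A ⊆ B → ∀ i ∉ B,
      h (insert i B) - h B ≥ β * (h (insert i A) - h A))
    (A : Finset (Fin n)) :
    β * h A ≤ ∑ i ∈ A, chainMarginal π h i := by
  rw [sum_chainMarginal, ← sum_sub_inter_lovaszChain π h h0 A, mul_sum]
  refine sum_le_sum fun k hk => ?_
  have hDRk := hDR (A ∩ _) _ inter_subset_right (π k) (apply_notMem_lovaszChain π k)
  rwa [← lovaszChain_succ, ← inter_lovaszChain_succ_of_mem π (mem_filter.1 hk).2] at hDRk

end chainMarginal

section convexClosure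

variable {n : ℕ} {z : Fin n → ℝ}

lemma sum_mul_le_sum_filter_pos (c : Fin n → ℝ) (hz : ∀ j, z j ∈ Set.Icc (0 : ℝ) 1) :
    ∑ j, c j * z j ≤ ∑ j with 0 < c j, c j := by
  rw [sum_filter]
  refine sum_le_sum fun j _ => ?_
  obtain ⟨hz0, hz1⟩ := hz j
  split_ifs <;> nlinarith

lemma bddAbove_convexClosure (h : Finset (Fin n) → ℝ) (hz : ∀ j, z j ∈ Set.Icc (0 : ℝ) 1) :
    BddAbove {r : ℝ | ∃ (g : Fin n → ℝ) (ρ : ℝ),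
      (∀ A : Finset (Fin n), (∑ i ∈ A, g i) + ρ ≤ h A) ∧ r = (∑ j, g j * z j) + ρ} := by
  refine ⟨univ.sup' univ_nonempty h, ?_⟩
  rintro r ⟨c, ρ, hfeas, rfl⟩
  have hpos := hfeas {j | 0 < c j}
  have hsup := le_sup' h (mem_univ ({j | 0 < c j} : Finset (Fin n)))
  linarith [sum_mul_le_sum_filter_pos c hz]

lemma sum_mul_le_convexClosure (h : Finset (Fin n) → ℝ) (hz : ∀ j, z j ∈ Set.Icc (0 : ℝ) 1)
    {c : Fin n → ℝ} (hc : ∀ A : Finset (Fin n), ∑ i ∈ A, c i ≤ h A) :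
    ∑ j, c j * z j ≤ convexClosure n h z := by
  unfold convexClosure
  simpa using le_csSup (bddAbove_convexClosure h hz) ⟨c, 0, fun A => by simpa using hc A, rfl⟩

end convexClosure

theorem subgradient_convex_closure_bound_general (n : ℕ) (α β : ℝ) (hα : 0 < α) (hβ : 0 < β)
    (fbar fund : Finset (Fin n) → ℝ)
    (hbar0 : fbar ∅ = 0) (hund0 : fund ∅ = 0)
    (hbarDR : ∀ A B : Finset (Fin n), A ⊆ B → ∀ i ∉ B,
      fbar (insert i A) - fbar A ≥ α * (fbar (insert i B) - fbar B))
    (hundDR : ∀ A B : Finset (Fin n), A ⊆ B → ∀ i ∉ B,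
      fund (insert i B) - fund B ≥ β * (fund (insert i A) - fund A))
    (f : Finset (Fin n) → ℝ) (hfdef : ∀ S, f S = fbar S - fund S)
    (π : Equiv.Perm (Fin n))
    (g : Fin n → ℝ)
    (hg : ∀ k : Fin n, g (π k) = f (lovaszChain n π ((k : ℕ) + 1)) - f (lovaszChain n π (k : ℕ))) :
    ∀ z : Fin n → ℝ, (∀ j, z j ∈ Set.Icc (0:ℝ) 1) →
      (∑ j, g j * z j) ≤
        (1/α) * convexClosure n fbar z + β * convexClosure n (fun A => - fund A) z := by
  intro z hz
  have hg_sub (j : Fin n) : g j = chainMarginal π fbar j - chainMarginal π fund j := by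
    obtain ⟨k, rfl⟩ := π.surjective j
    rw [hg, chainMarginal_apply, chainMarginal_apply, hfdef, hfdef]
    ring
  have hbar : α * ∑ j, chainMarginal π fbar j * z j ≤ convexClosure n fbar z := by
    simpa only [mul_sum, mul_assoc] using sum_mul_le_convexClosure fbar hz
      (c := fun j => α * chainMarginal π fbar j) fun A => by
        simpa only [mul_sum] using mul_sum_chainMarginal_le π hbar0 hbarDR A
  have hund : -(∑ j, chainMarginal π fund j * z j) / β
      ≤ convexClosure n (fun A => -fund A) z := by
    simpa only [neg_div, sum_div, ← sum_neg_distrib, div_mul_eq_mul_div, neg_mul]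
      using sum_mul_le_convexClosure (fun A => -fund A) hz
        (c := fun j => -chainMarginal π fund j / β) fun A => by
          rw [← sum_div, sum_neg_distrib, div_le_iff₀ hβ]
          linarith [mul_le_sum_chainMarginal π hund0 hundDR A]
  rw [← le_div_iff₀' hα] at hbar
  rw [div_le_iff₀' hβ] at hund
  simp only [hg_sub, sub_mul, sum_sub_distrib, one_div_mul_eq_div]
  linarith

/-- For `f = f̄ − f̲` as in the weakly DR setting, the Lovász subgradient `g` at `x`
satisfies `g^⊤ z ≤ (1/α)(f̄)_C(z) + β(−f̲)_C(z)` for all `z ∈ [0,1]^n`. -/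
theorem subgradient_convex_closure_bound (n : ℕ) (α β : ℝ) (hα : 0 < α) (hβ : 0 < β)
    (fbar fund : Finset (Fin n) → ℝ)
    (hbar0 : fbar ∅ = 0) (hund0 : fund ∅ = 0)
    (hbarmono : ∀ A B : Finset (Fin n), A ⊆ B → fbar A ≤ fbar B)
    (hundmono : ∀ A B : Finset (Fin n), A ⊆ B → fund A ≤ fund B)
    (hbarDR : ∀ A B : Finset (Fin n), A ⊆ B → ∀ i ∉ B,
      fbar (insert i A) - fbar A ≥ α * (fbar (insert i B) - fbar B))
    (hundDR : ∀ A B : Finset (Fin n), A ⊆ B → ∀ i ∉ B,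
      fund (insert i B) - fund B ≥ β * (fund (insert i A) - fund A))
    (f : Finset (Fin n) → ℝ) (hfdef : ∀ S, f S = fbar S - fund S)
    (x : Fin n → ℝ) (hx : ∀ j, x j ∈ Set.Icc (0:ℝ) 1)
    (π : Equiv.Perm (Fin n)) (v : ℕ → ℝ)
    (hv0 : v 0 = 1) (hvn : v (n+1) = 0)
    (hvx : ∀ k : Fin n, v ((k : ℕ) + 1) = x (π k))
    (hmono : ∀ i j : ℕ, i ≤ j → j ≤ n + 1 → v j ≤ v i)
    (g : Fin n → ℝ)
    (hg : ∀ k : Fin n, g (π k) = f (lovaszChain n π ((k : ℕ) + 1)) - f (lovaszChain n π (k : ℕ))) :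
    ∀ z : Fin n → ℝ, (∀ j, z j ∈ Set.Icc (0:ℝ) 1) →
      (∑ j, g j * z j) ≤
        (1/α) * convexClosure n fbar z + β * convexClosure n (fun A => - fund A) z :=
  subgradient_convex_closure_bound_general n α β hα hβ fbar fund hbar0 hund0 hbarDR hundDR f hfdef π
    g hg
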